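/- Let W = 1, 2 ≤ d < ∞, and Φ : ℝ → ℝ^d be C¹. Suppose f ∈ ℝ^d is such that the gradient flow trajectory w(t) for L_f(w) = (1/2)‖f − Φ(w)‖², w(0)=0, satisfies inf_t L_f(w(t)) = 0. Then either f = Φ(w) for some w ∈ ℝ, or f equals one of the limits lim_{w→+∞} Φ(w), lim_{w→−∞} Φ(w) (when these exist). -/

import Mathlib

open MeasureTheory Filter Topology Set

/-- The square loss for a one-parameter model. -/
noncomputable def loss1 {d : ℕ} (Φ : ℝ → EuclideanSpace ℝ (Fin d))
    (f : EuclideanSpace ℝ (Fin d)) (w : ℝ) : ℝ :=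
  (1 / 2) * ‖f - Φ w‖ ^ 2

/-!
The loss `L = loss1 Φ f` decreases along the gradient flow. If the trajectory `w` stays
bounded, the continuous loss attains its minimum on the compact closure of `w([0, ∞))`, and
that minimum is below the infimum `0` along the flow, so `Φ u = f` for some `u`. If `w` is
unbounded above, then by the intermediate value theorem every large `x` is visited by the flow
after any given time `t₀`, so `L x ≤ L (w t₀)`; hence `L → 0` at `+∞`, i.e. `Φ → f`. The case
of `w` unbounded below is the mirror image.
-/

section GradientFlow

variable {L w : ℝ → ℝ}

theorem antitoneOn_comp_of_gradient_flow (hL : Differentiable ℝ L)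
    (hflow : ∀ t ≥ (0 : ℝ), HasDerivAt w (-deriv L (w t)) t) : AntitoneOn (L ∘ w) (Ici 0) := by
  have hderiv : ∀ t ∈ Ici (0 : ℝ), HasDerivAt (L ∘ w) (deriv L (w t) * -deriv L (w t)) t :=
    fun t ht => (hL (w t)).hasDerivAt.comp t (hflow t ht)
  refine antitoneOn_of_hasDerivWithinAt_nonpos (convex_Ici 0)
    (fun t ht => (hderiv t ht).continuousAt.continuousWithinAt)
    (fun t ht => (hderiv t (interior_subset ht)).hasDerivWithinAt) fun t _ => ?_
  nlinarith [sq_nonneg (deriv L (w t))]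

theorem exists_eq_zero_of_bddAbove_of_bddBelow (hL : Continuous L) (hL0 : ∀ x, 0 ≤ L x)
    (hub : BddAbove (w '' Ici 0)) (hlb : BddBelow (w '' Ici 0))
    (hinf : ⨅ t : Ici (0 : ℝ), L (w t) = 0) : ∃ u, L u = 0 := by
  have hcompact : IsCompact (closure (w '' Ici 0)) :=
    (Metric.isBounded_of_bddAbove_of_bddBelow hub hlb).isCompact_closure
  obtain ⟨u, -, hmin⟩ := hcompact.exists_isMinOn
    ((nonempty_Ici.image w).mono subset_closure) hL.continuousOn
  refine ⟨u, le_antisymm ?_ (hL0 u)⟩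
  exact hinf ▸ le_ciInf fun t => hmin (subset_closure ⟨t, t.2, rfl⟩)

theorem eventually_le_of_not_bddAbove (hwc : ContinuousOn w (Ici 0))
    (hanti : AntitoneOn (L ∘ w) (Ici 0)) (hub : ¬BddAbove (w '' Ici 0))
    {t₀ : ℝ} (ht₀ : 0 ≤ t₀) : ∀ᶠ x in atTop, L x ≤ L (w t₀) := by
  obtain ⟨M, hM⟩ := (isCompact_Icc.image_of_continuousOn
    (hwc.mono (Icc_subset_Ici_self : Icc 0 t₀ ⊆ Ici 0))).bddAbove
  filter_upwards [eventually_gt_atTop M, eventually_ge_atTop (w 0)] with x hxM hx0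
  obtain ⟨_, ⟨t', ht', rfl⟩, hxt'⟩ := not_bddAbove_iff.1 hub x
  obtain ⟨t, ht, rfl⟩ :=
    intermediate_value_Icc ht' (hwc.mono Icc_subset_Ici_self) ⟨hx0, hxt'.le⟩
  have ht₀t : t₀ ≤ t := by
    by_contra! htt₀
    exact (hM ⟨t, ⟨ht.1, htt₀.le⟩, rfl⟩).not_gt hxM
  exact hanti ht₀ (ht₀.trans ht₀t) ht₀t

theorem tendsto_atTop_of_not_bddAbove (hL0 : ∀ x, 0 ≤ L x) (hwc : ContinuousOn w (Ici 0))
    (hanti : AntitoneOn (L ∘ w) (Ici 0)) (hub : ¬BddAbove (w '' Ici 0))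
    (hinf : ⨅ t : Ici (0 : ℝ), L (w t) = 0) : Tendsto L atTop (𝓝 0) := by
  refine tendsto_order.2 ⟨fun a ha => .of_forall fun x => ha.trans_le (hL0 x), fun a ha => ?_⟩
  obtain ⟨⟨t₀, ht₀⟩, hlt⟩ := exists_lt_of_ciInf_lt (hinf.symm ▸ ha)
  filter_upwards [eventually_le_of_not_bddAbove hwc hanti hub ht₀] with x hx
  exact hx.trans_lt hlt

theorem tendsto_atBot_of_not_bddBelow (hL0 : ∀ x, 0 ≤ L x) (hwc : ContinuousOn w (Ici 0))
    (hanti : AntitoneOn (L ∘ w) (Ici 0)) (hlb : ¬BddBelow (w '' Ici 0))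
    (hinf : ⨅ t : Ici (0 : ℝ), L (w t) = 0) : Tendsto L atBot (𝓝 0) := by
  have hub : ¬BddAbove ((-w) '' Ici 0) := by
    rwa [show -w = Neg.neg ∘ w from rfl, image_comp, image_neg_eq_neg, bddAbove_neg]
  have h := tendsto_atTop_of_not_bddAbove (L := fun x => L (-x)) (fun x => hL0 (-x)) hwc.neg
    (by simpa [Function.comp_def] using hanti) hub (by simpa using hinf)
  simpa [Function.comp_def] using h.comp tendsto_neg_atBot_atTop

end GradientFlow

section Loss

variable {d : ℕ} {Φ : ℝ → EuclideanSpace ℝ (Fin d)} {f : EuclideanSpace ℝ (Fin d)}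

theorem loss1_nonneg (u : ℝ) : 0 ≤ loss1 Φ f u := by
  unfold loss1
  positivity

theorem loss1_eq_zero_iff {u : ℝ} : loss1 Φ f u = 0 ↔ Φ u = f := by
  simpa [loss1, sub_eq_zero] using eq_comm

theorem Differentiable.loss1 (hΦ : Differentiable ℝ Φ) : Differentiable ℝ (loss1 Φ f) :=
  (((differentiable_const f).sub hΦ).norm_sq ℝ).const_mul _

theorem tendsto_of_tendsto_loss1_zero {l : Filter ℝ} (h : Tendsto (loss1 Φ f) l (𝓝 0)) :
    Tendsto Φ l (𝓝 f) := by
  rw [tendsto_iff_norm_sub_tendsto_zero]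
  have hsqrt := (Real.continuous_sqrt.tendsto _).comp (h.const_mul 2)
  simp only [mul_zero, Real.sqrt_zero] at hsqrt
  refine hsqrt.congr fun x => ?_
  simp only [Function.comp_apply, loss1]
  rw [← mul_assoc, mul_one_div_cancel two_ne_zero, one_mul, Real.sqrt_sq (norm_nonneg _),
    norm_sub_rev]

end Loss

theorem one_param_learnable_characterization_general (d : ℕ)
    (Φ : ℝ → EuclideanSpace ℝ (Fin d))
    (hΦ : ContDiff ℝ 1 Φ)
    (f : EuclideanSpace ℝ (Fin d)) (w : ℝ → ℝ)
    (hflow : ∀ t ≥ (0 : ℝ), HasDerivAt w (-(deriv (loss1 Φ f) (w t))) t)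
    (hlearn : (⨅ t : Set.Ici (0 : ℝ), loss1 Φ f (w t)) = 0) :
    (∃ u : ℝ, Φ u = f) ∨
    (Filter.Tendsto Φ Filter.atTop (nhds f)) ∨
    (Filter.Tendsto Φ Filter.atBot (nhds f)) := by
  have hL : Differentiable ℝ (loss1 Φ f) := (hΦ.differentiable one_ne_zero).loss1
  have hwc : ContinuousOn w (Ici 0) := fun t ht => (hflow t ht).continuousAt.continuousWithinAt
  have hanti := antitoneOn_comp_of_gradient_flow hL hflow
  by_cases hub : BddAbove (w '' Ici 0)
  · by_cases hlb : BddBelow (w '' Ici 0)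
    · obtain ⟨u, hu⟩ :=
        exists_eq_zero_of_bddAbove_of_bddBelow hL.continuous loss1_nonneg hub hlb hlearn
      exact Or.inl ⟨u, loss1_eq_zero_iff.1 hu⟩
    · exact Or.inr <| Or.inr <| tendsto_of_tendsto_loss1_zero <|
        tendsto_atBot_of_not_bddBelow loss1_nonneg hwc hanti hlb hlearn
  · exact Or.inr <| Or.inl <| tendsto_of_tendsto_loss1_zero <|
      tendsto_atTop_of_not_bddAbove loss1_nonneg hwc hanti hub hlearn

/-- With one parameter, a learnable target is either attained by `Φ` or is one of the
limits of `Φ` at `±∞`. -/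
theorem one_param_learnable_characterization (d : ℕ) (hd : 2 ≤ d)
    (Φ : ℝ → EuclideanSpace ℝ (Fin d))
    (hΦ : ContDiff ℝ 1 Φ) (hlip : LocallyLipschitz (deriv Φ))
    (f : EuclideanSpace ℝ (Fin d)) (w : ℝ → ℝ) (hw0 : w 0 = 0)
    (hflow : ∀ t ≥ (0 : ℝ), HasDerivAt w (-(deriv (loss1 Φ f) (w t))) t)
    (hlearn : (⨅ t : Set.Ici (0 : ℝ), loss1 Φ f (w t)) = 0) :
    (∃ u : ℝ, Φ u = f) ∨
    (Filter.Tendsto Φ Filter.atTop (nhds f)) ∨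
    (Filter.Tendsto Φ Filter.atBot (nhds f)) :=
  one_param_learnable_characterization_general d Φ hΦ f w hflow hlearn
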